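/- arXiv:1709.07314 — 2 statements merged into one kernel-verified Lean document; each statement's English description precedes it below -/
import Mathlib

section
/- Let n ≥ 1, let L_n be a family of n-tuples L = (σ_1,...,σ_n) of words in {r,s}ⁿ such that all words occurring in all tuples of L_n are pairwise distinct (if σ_i of tuple L equals σ'_j of tuple L' then L = L' and i = j). Let T_L be defined as in the previous context. Then for any word σ ∈ {r,s}^m with 0 ≤ m ≤ n and any EL concept expression C over the signature: if there exists L = (σ_1,...,σ_n) ∈ L_n with T_L ⊨ C ⊑ ∃σ.M, then either (1) there exists i ≤ n such that σ = σ_i and C has A, A_i, or B_i as a top-level conjunct, or (2) ∅ ⊨ C ⊑ ∃σ.M. -/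
/-- EL concept expressions over concept names `C` and role names `R`. -/
inductive ELC (C R : Type) : Type where
  | top : ELC C R
  | cn : C → ELC C R
  | conj : ELC C R → ELC C R → ELC C R
  | ex : R → ELC C R → ELC C R

/-- An interpretation. -/
structure Interp (C R : Type) where
  dom : Type
  cname : C → Set dom
  rname : R → Set (dom × dom)

/-- Semantics of EL concept expressions. -/
def Interp.sem {C R : Type} (I : Interp C R) : ELC C R → Set I.dom
  | .top => Set.univ
  | .cn A => I.cname A
  | .conj c d => I.sem c ∩ I.sem d
  | .ex r c => {x | ∃ y, (x, y) ∈ I.rname r ∧ y ∈ I.sem c}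

/-- The pairwise distinct concept names `A`, `M`, `X_i`, `A_i`, `B_i`. -/
inductive CN : Type where
  | A : CN
  | M : CN
  | X : ℕ → CN
  | Ai : ℕ → CN
  | Bi : ℕ → CN

/-- The two distinct role names `r` and `s`. -/
inductive RN : Type where
  | r : RN
  | s : RN

/-- `∃σ.C` for a word `σ` over `{r,s}`: nested existential restrictions. -/
def exSeq (w : List RN) (c : ELC CN RN) : ELC CN RN :=
  w.foldr ELC.ex c

/-- Conjunction of a list of concepts (`⊤` for the empty list). -/
def conjList (l : List (ELC CN RN)) : ELC CN RN :=
  l.foldr ELC.conj .top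

/-- The TBox `T_0 = {X_i ⊑ ∃r.X_{i+1} ⊓ ∃s.X_{i+1} : 0 ≤ i < n}`. -/
def T0 (n : ℕ) : List (ELC CN RN × ELC CN RN) :=
  (List.range n).map fun i =>
    (.cn (.X i), .conj (.ex .r (.cn (.X (i + 1)))) (.ex .s (.cn (.X (i + 1)))))

/-- The concept `X_0 ⊓ ∃σ_1.M ⊓ … ⊓ ∃σ_n.M`. -/
def bigA (n : ℕ) (L : Fin n → List RN) : ELC CN RN :=
  .conj (.cn (.X 0)) (conjList ((List.finRange n).map fun i => exSeq (L i) (.cn .M)))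

/-- The TBox `T_L`: `T_0` together with `A_i ⊑ ∃σ_i.M ⊓ X_0`,
`B_i ⊑ ∃σ_i.M ⊓ X_0` and the equivalence
`A ≡ X_0 ⊓ ∃σ_1.M ⊓ … ⊓ ∃σ_n.M` (given as two inclusions). -/
def TL (n : ℕ) (L : Fin n → List RN) : List (ELC CN RN × ELC CN RN) :=
  T0 n ++
  ((List.finRange n).map fun i =>
    (.cn (.Ai i.1), .conj (exSeq (L i) (.cn .M)) (.cn (.X 0)))) ++
  ((List.finRange n).map fun i =>
    (.cn (.Bi i.1), .conj (exSeq (L i) (.cn .M)) (.cn (.X 0)))) ++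
  [(.cn .A, bigA n L), (bigA n L, .cn .A)]

/-- `T ⊨ c ⊑ d`: the inclusion holds in every model of the TBox `T`. -/
def Entails (T : List (ELC CN RN × ELC CN RN)) (c d : ELC CN RN) : Prop :=
  ∀ I : Interp CN RN, (∀ p ∈ T, I.sem p.1 ⊆ I.sem p.2) → I.sem c ⊆ I.sem d


/-- `TopConj g c`: `g` is a top-level conjunct of `c` (a conjunct not
nested inside an existential restriction). -/
inductive TopConj {C R : Type} : ELC C R → ELC C R → Prop where
  | base (c : ELC C R) : TopConj c c
  | left {g a : ELC C R} (b : ELC C R) : TopConj g a → TopConj g (.conj a b)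
  | right {g b : ELC C R} (a : ELC C R) : TopConj g b → TopConj g (.conj a b)

/-- The concept names allowed in the signature of the TBoxes `T_L`. -/
def goodCN (n : ℕ) : CN → Prop
  | .A => True
  | .M => True
  | .X i => i ≤ n
  | .Ai i => i < n
  | .Bi i => i < n

/-- The concept uses only concept names from the signature. -/
def InSig (n : ℕ) : ELC CN RN → Prop
  | .top => True
  | .cn a => goodCN n a
  | .conj c d => InSig n c ∧ InSig n d
  | .ex _ c => InSig n c

/-!
Test the entailment in a canonical model of `T_L` whose elements are concepts. A concept `D`
satisfies its top-level conjuncts and has a `ρ`-successor `E` for every top-level conjunct `∃ρ.E`;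
the axioms of `T_L` add only `X`-chains, which never reach `M`, and, at a node triggered by `A`,
`A_i` or `B_i`, a path spelling `σ_i` into `M`. Since `C` satisfies itself, it reaches `M` along
`σ`, either through nested top-level restrictions alone, which gives `∅ ⊨ C ⊑ ∃σ.M`, or by first
following such restrictions to a triggered node and then `σ_i`. As `|σ| ≤ n = |σ_i|`, the second
case forces the trigger to sit at `C` itself and `σ = σ_i`.
-/

namespace TopConj

variable {C R : Type}

theorem trans {g x y : ELC C R} (h₁ : TopConj g x) (h₂ : TopConj x y) : TopConj g y := by
  induction h₂ with
  | base => exact h₁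
  | left b _ ih => exact .left b ih
  | right a _ ih => exact .right a ih

theorem sem_subset {g c : ELC C R} (h : TopConj g c) (I : Interp C R) : I.sem c ⊆ I.sem g := by
  induction h with
  | base => exact subset_rfl
  | left _ _ ih => exact Set.inter_subset_left.trans ih
  | right _ _ ih => exact Set.inter_subset_right.trans ih

@[simp]
theorem cn_iff {g : ELC C R} {N : C} : TopConj g (.cn N) ↔ g = .cn N :=
  ⟨fun h => by cases h; rfl, fun h => h ▸ .base _⟩

@[simp]
theorem ex_iff {g : ELC C R} {ρ : R} {e : ELC C R} : TopConj g (.ex ρ e) ↔ g = .ex ρ e :=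
  ⟨fun h => by cases h; rfl, fun h => h ▸ .base _⟩

end TopConj

theorem mem_sem_conjList_iff (I : Interp CN RN) (l : List (ELC CN RN)) (x : I.dom) :
    x ∈ I.sem (conjList l) ↔ ∀ d ∈ l, x ∈ I.sem d := by
  induction l with
  | nil => simp [conjList, Interp.sem]
  | cons a l ih => simp [conjList, Interp.sem, ← ih]

section Canonical

variable {n : ℕ} (L : Fin n → List RN)

def Triggers (i : ℕ) (c : ELC CN RN) : Prop :=
  TopConj (.cn .A) c ∨ TopConj (.cn (.Ai i)) c ∨ TopConj (.cn (.Bi i)) c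

def InX (j : ℕ) (c : ELC CN RN) : Prop :=
  TopConj (.cn (.X j)) c ∨ j = 0 ∧ ∃ i, Triggers i c

def Edge (ρ : RN) (c d : ELC CN RN) : Prop :=
  TopConj (.ex ρ d) c
  ∨ (∃ j, InX j c ∧ d = .cn (.X (j + 1)))
  ∨ (∃ (i : Fin n) (w : List RN), Triggers i c ∧ L i = ρ :: w ∧ d = exSeq w (.cn .M))

def PathToM : List RN → ELC CN RN → Prop
  | [], c => TopConj (.cn .M) c
  | ρ :: w, c => ∃ d, Edge L ρ c d ∧ PathToM w d

/-- The extension of `bigA` is written through `PathToM` because the semantics of the model is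
not available inside its own definition. -/
def canonicalModel : Interp CN RN where
  dom := ELC CN RN
  cname
    | .X j => {c | InX j c}
    | .A => {c | TopConj (.cn .A) c ∨ InX 0 c ∧ ∀ i, PathToM L (L i) c}
    | N => {c | TopConj (.cn N) c}
  rname ρ := {p | Edge L ρ p.1 p.2}

variable {L}

theorem edge_X {ρ : RN} {k : ℕ} {d : ELC CN RN} (h : Edge L ρ (.cn (.X k)) d) :
    d = .cn (.X (k + 1)) := by
  simpa [Edge, InX, Triggers, @eq_comm _ k] using h

theorem edge_ex {ρ ρ' : RN} {e d : ELC CN RN} (h : Edge L ρ (.ex ρ' e) d) : ρ = ρ' ∧ d = e := by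
  simpa [Edge, InX, Triggers] using h

theorem not_edge_M {ρ : RN} {d : ELC CN RN} : ¬ Edge L ρ (.cn .M) d := by
  simp [Edge, InX, Triggers]

theorem mem_sem_exSeq_M_iff (w : List RN) (c : ELC CN RN) :
    c ∈ (canonicalModel L).sem (exSeq w (.cn .M)) ↔ PathToM L w c := by
  induction w generalizing c with
  | nil => rfl
  | cons ρ w ih => exact exists_congr fun d => and_congr_right' (ih d)

theorem pathToM_exSeq (w : List RN) : PathToM L w (exSeq w (.cn .M)) := by
  induction w with
  | nil => exact .base _
  | cons ρ w ih => exact ⟨_, Or.inl (.base _), ih⟩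

theorem pathToM_of_triggers {i : Fin n} (hi : L i ≠ []) {c : ELC CN RN}
    (h : Triggers i c) : PathToM L (L i) c := by
  obtain ⟨ρ, w, hw⟩ := List.exists_cons_of_ne_nil hi
  rw [hw]
  exact ⟨_, Or.inr (Or.inr ⟨i, w, h, hw, rfl⟩), pathToM_exSeq w⟩

theorem not_pathToM_X (w : List RN) (k : ℕ) : ¬ PathToM L w (.cn (.X k)) := by
  induction w generalizing k with
  | nil => simp [PathToM]
  | cons ρ w ih =>
    rintro ⟨d, hedge, hd⟩
    exact ih (k + 1) (edge_X hedge ▸ hd)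

theorem eq_of_pathToM_exSeq {u w : List RN} (h : PathToM L w (exSeq u (.cn .M))) : w = u := by
  induction u generalizing w with
  | nil =>
    cases w with
    | nil => rfl
    | cons ρ w => exact (not_edge_M h.choose_spec.1).elim
  | cons ρ' u ih =>
    cases w with
    | nil => simp [PathToM, exSeq] at h
    | cons ρ w =>
      obtain ⟨d, hedge, hd⟩ := h
      obtain ⟨rfl, rfl⟩ := edge_ex hedge
      rw [ih hd]

theorem mem_sem_canonicalModel_of_topConj {e c : ELC CN RN} (h : TopConj e c) :
    c ∈ (canonicalModel L).sem e := by
  induction e generalizing c with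
  | top => trivial
  | cn N => cases N <;> first | exact Or.inl h | exact h
  | conj a b iha ihb => exact ⟨iha ((TopConj.left b (.base a)).trans h),
      ihb ((TopConj.right a (.base b)).trans h)⟩
  | ex ρ e ih => exact ⟨e, Or.inl h, ih (.base e)⟩

theorem mem_sem_bigA_iff (c : ELC CN RN) :
    c ∈ (canonicalModel L).sem (bigA n L) ↔ InX 0 c ∧ ∀ i, PathToM L (L i) c := by
  refine and_congr Iff.rfl ((mem_sem_conjList_iff (canonicalModel L) _ c).trans ?_)
  simp only [List.mem_map, List.mem_finRange, true_and, forall_exists_index,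
    forall_apply_eq_imp_iff]
  exact forall_congr' fun i => mem_sem_exSeq_M_iff (L i) c

theorem canonicalModel_models (hne : ∀ i, L i ≠ []) :
    ∀ p ∈ TL n L, (canonicalModel L).sem p.1 ⊆ (canonicalModel L).sem p.2 := by
  intro p hp
  simp only [TL, T0, List.mem_append, List.mem_cons, List.mem_map, List.mem_range,
    List.not_mem_nil, or_false] at hp
  rcases hp with ((⟨j, -, rfl⟩ | ⟨i, -, rfl⟩) | ⟨i, -, rfl⟩) | rfl | rfl
  · intro c hc
    exact ⟨⟨_, Or.inr (Or.inl ⟨j, hc, rfl⟩), Or.inl (.base _)⟩,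
      ⟨_, Or.inr (Or.inl ⟨j, hc, rfl⟩), Or.inl (.base _)⟩⟩
  · intro c hc
    exact ⟨(mem_sem_exSeq_M_iff _ c).mpr (pathToM_of_triggers (hne _) (Or.inr (Or.inl hc))),
      Or.inr ⟨rfl, i, Or.inr (Or.inl hc)⟩⟩
  · intro c hc
    exact ⟨(mem_sem_exSeq_M_iff _ c).mpr (pathToM_of_triggers (hne _) (Or.inr (Or.inr hc))),
      Or.inr ⟨rfl, i, Or.inr (Or.inr hc)⟩⟩
  · rintro c (hA | hbigA)
    · exact (mem_sem_bigA_iff c).mpr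
        ⟨Or.inr ⟨rfl, 0, Or.inl hA⟩, fun i => pathToM_of_triggers (hne _) (Or.inl hA)⟩
    · exact (mem_sem_bigA_iff c).mpr hbigA
  · exact fun c hc => Or.inr ((mem_sem_bigA_iff c).mp hc)

theorem triggers_or_entails_of_pathToM (w : List RN) (hw : ∀ i, w.length ≤ (L i).length)
    (c : ELC CN RN) (h : PathToM L w c) :
    (∃ i : Fin n, w = L i ∧ Triggers i c) ∨ Entails [] c (exSeq w (.cn .M)) := by
  induction w generalizing c with
  | nil => exact Or.inr fun I _ => h.sem_subset I
  | cons ρ w ih =>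
    obtain ⟨d, hedge, hd⟩ := h
    rcases hedge with htc | ⟨j, -, rfl⟩ | ⟨i, u, htrig, hi, rfl⟩
    · rcases ih (fun i => (Nat.le_succ _).trans (hw i)) d hd with ⟨i, rfl, -⟩ | hent
      · exact absurd (hw i) (by simp)
      · refine Or.inr fun I hI x hx => ?_
        obtain ⟨y, hxy, hy⟩ := htc.sem_subset I hx
        exact ⟨y, hxy, hent I hI hy⟩
    · exact absurd hd (not_pathToM_X w _)
    · exact Or.inl ⟨i, by rw [hi, eq_of_pathToM_exSeq hd], htrig⟩

theorem pathToM_of_entails (hne : ∀ i, L i ≠ []) {w : List RN} {c : ELC CN RN}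
    (h : Entails (TL n L) c (exSeq w (.cn .M))) : PathToM L w c :=
  (mem_sem_exSeq_M_iff w c).mp
    (h _ (canonicalModel_models hne) (mem_sem_canonicalModel_of_topConj (.base c)))

end Canonical

theorem TL_exM_entailment_general (n m : ℕ) (hm : m ≤ n)
    (Lfam : Set (Fin n → List RN))
    (hlen : ∀ L ∈ Lfam, ∀ i, (L i).length = n)
    (σ : List RN) (hσ : σ.length = m) (c : ELC CN RN)
    (hex : ∃ L ∈ Lfam, Entails (TL n L) c (exSeq σ (.cn .M))) :
    (∃ L ∈ Lfam, ∃ i : Fin n, σ = L i ∧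
      (TopConj (.cn .A) c ∨ TopConj (.cn (.Ai i.1)) c ∨ TopConj (.cn (.Bi i.1)) c)) ∨
    Entails [] c (exSeq σ (.cn .M)) := by
  obtain ⟨L, hL, hent⟩ := hex
  have hne : ∀ i, L i ≠ [] := fun i =>
    List.ne_nil_of_length_pos (by rw [hlen L hL i]; exact i.pos)
  have hσL : ∀ i, σ.length ≤ (L i).length := fun i => by rw [hσ, hlen L hL i]; exact hm
  exact (triggers_or_entails_of_pathToM σ hσL c (pathToM_of_entails hne hent)).imp_left
    fun ⟨i, hσi, htrig⟩ => ⟨L, hL, i, hσi, htrig⟩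

/-- let `L_n` be a family of tuples whose words are globally
pairwise distinct.  If some `T_L` with `L ∈ L_n` entails `C ⊑ ∃σ.M` (for a
word `σ` of length `m ≤ n` and `C` over the signature), then either there
are `L ∈ L_n` and `i` with `σ = σ_i` and `C` has `A`, `A_i` or `B_i` as a
top-level conjunct, or `∅ ⊨ C ⊑ ∃σ.M`. -/
theorem TL_exM_entailment (n m : ℕ) (hn : 1 ≤ n) (hm : m ≤ n)
    (Lfam : Set (Fin n → List RN))
    (hlen : ∀ L ∈ Lfam, ∀ i, (L i).length = n)
    (hdist : ∀ L ∈ Lfam, ∀ L' ∈ Lfam, ∀ i j : Fin n, L i = L' j → L = L' ∧ i = j)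
    (σ : List RN) (hσ : σ.length = m) (c : ELC CN RN) (hsig : InSig n c)
    (hex : ∃ L ∈ Lfam, Entails (TL n L) c (exSeq σ (.cn .M))) :
    (∃ L ∈ Lfam, ∃ i : Fin n, σ = L i ∧
      (TopConj (.cn .A) c ∨ TopConj (.cn (.Ai i.1)) c ∨ TopConj (.cn (.Bi i.1)) c)) ∨
    Entails [] c (exSeq σ (.cn .M)) :=
  TL_exM_entailment_general n m hm Lfam hlen σ hσ c hex
end

section
/- Let T_0 = {X_i ⊑ ∃r.X_{i+1} ⊓ ∃s.X_{i+1} : 0 ≤ i < n} over concept names X_0,...,X_n and role names r, s. For any 0 ≤ i ≤ n and any concept expression D over the signature {X_0,...,X_n,r,s} (plus possibly other concept names M, A, A_j, B_j): if T_0 ⊭ X_i ⊑ D, then there exists a sequence of role names t_1,...,t_l ∈ {r,s} with 0 ≤ l ≤ n − i + 1, and Y either ⊤ or a concept name, such that ∅ ⊨ D ⊑ ∃t_1...∃t_l.Y and T_0 ⊭ X_i ⊑ ∃t_1...∃t_l.Y. -/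
/-!
The chain `0 → 1 → ⋯ → n`, in which both roles link `j` to `j + 1` and `X_j` holds exactly at `j`,
is a model of `T_0` that is canonical for `X_j`: `T_0 ⊨ X_j ⊑ D` iff `j ∈ D` in the chain. If
`j ∉ D`, follow a failing branch of `D`: at a conjunction pick a failing conjunct, at `∃t.C` with
`j < n` pass to `j + 1 ∉ C`, and at the end `j ≥ n` of the chain already `∃t.⊤` fails. The roles and
leaf collected on the way give `∃t_1…∃t_l.Y`, with `l ≤ n − j + 1`.
-/

def Interp.Models {C R : Type} (I : Interp C R) (T : List (ELC C R × ELC C R)) : Prop :=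
  ∀ p ∈ T, I.sem p.1 ⊆ I.sem p.2

namespace Entails

variable {T : List (ELC CN RN × ELC CN RN)} {c d e : ELC CN RN}

theorem refl (T : List (ELC CN RN × ELC CN RN)) (c : ELC CN RN) : Entails T c c :=
  fun _ _ _ hx => hx

theorem top : Entails T c .top :=
  fun _ _ _ _ => trivial

theorem trans (hcd : Entails T c d) (hde : Entails T d e) : Entails T c e :=
  fun I hI _ hx => hde I hI (hcd I hI hx)

theorem conj (hcd : Entails T c d) (hce : Entails T c e) : Entails T c (.conj d e) :=
  fun I hI _ hx => ⟨hcd I hI hx, hce I hI hx⟩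

theorem conj_left (h : Entails T c e) : Entails T (.conj c d) e :=
  fun I hI _ hx => h I hI hx.1

theorem conj_right (h : Entails T d e) : Entails T (.conj c d) e :=
  fun I hI _ hx => h I hI hx.2

theorem ex (t : RN) (h : Entails T c d) : Entails T (.ex t c) (.ex t d) :=
  fun I hI _ ⟨y, hxy, hy⟩ => ⟨y, hxy, h I hI hy⟩

end Entails

theorem T0_entails_X_ex {n j : ℕ} (hj : j < n) (t : RN) :
    Entails (T0 n) (.cn (.X j)) (.ex t (.cn (.X (j + 1)))) := by
  intro I hI x hx
  have hax : ((.cn (.X j) : ELC CN RN),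
      (.conj (.ex .r (.cn (.X (j + 1)))) (.ex .s (.cn (.X (j + 1)))) : ELC CN RN)) ∈ T0 n :=
    List.mem_map.2 ⟨j, List.mem_range.2 hj, rfl⟩
  obtain ⟨hr, hs⟩ := hI _ hax hx
  cases t
  · exact hr
  · exact hs

def chainModel (n : ℕ) : Interp CN RN where
  dom := ℕ
  cname
    | .X k => {k}
    | _ => ∅
  rname _ := {p | p.2 = p.1 + 1 ∧ p.1 < n}

theorem chainModel_mem_X (n j : ℕ) : j ∈ (chainModel n).sem (.cn (.X j)) :=
  rfl

theorem chainModel_mem_ex {n j : ℕ} {t : RN} {c : ELC CN RN} :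
    j ∈ (chainModel n).sem (.ex t c) ↔ j < n ∧ j + 1 ∈ (chainModel n).sem c := by
  constructor
  · rintro ⟨y, ⟨hy, hj⟩, hc⟩
    obtain rfl : y = j + 1 := hy
    exact ⟨hj, hc⟩
  · rintro ⟨hj, hc⟩
    exact ⟨j + 1, ⟨rfl, hj⟩, hc⟩

theorem chainModel_models_T0 (n : ℕ) : (chainModel n).Models (T0 n) := by
  intro p hp
  obtain ⟨k, hk, rfl⟩ := List.mem_map.1 hp
  rintro x rfl
  exact ⟨chainModel_mem_ex.2 ⟨List.mem_range.1 hk, rfl⟩,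
    chainModel_mem_ex.2 ⟨List.mem_range.1 hk, rfl⟩⟩

theorem entails_T0_of_mem_chainModel {n : ℕ} (D : ELC CN RN) :
    ∀ {j : ℕ}, j ∈ (chainModel n).sem D → Entails (T0 n) (.cn (.X j)) D := by
  induction D with
  | top => exact fun _ => Entails.top
  | cn a =>
    cases a with
    | X k => rintro j rfl; exact Entails.refl _ _
    | _ => exact fun h => h.elim
  | conj c d ihc ihd => exact fun h => (ihc h.1).conj (ihd h.2)
  | ex t c ih =>
    intro j h
    obtain ⟨hj, hc⟩ := chainModel_mem_ex.1 h
    exact (T0_entails_X_ex hj t).trans ((ih hc).ex t)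

theorem entails_T0_iff_mem_chainModel {n j : ℕ} {D : ELC CN RN} :
    Entails (T0 n) (.cn (.X j)) D ↔ j ∈ (chainModel n).sem D :=
  ⟨fun h => h _ (chainModel_models_T0 n) (chainModel_mem_X n j), entails_T0_of_mem_chainModel D⟩

theorem exists_exSeq_of_not_mem_chainModel {n : ℕ} (D : ELC CN RN) :
    ∀ {j : ℕ}, j ∉ (chainModel n).sem D →
    ∃ (ts : List RN) (Y : ELC CN RN), ts.length ≤ n - j + 1 ∧
      (Y = .top ∨ ∃ a : CN, Y = .cn a) ∧
      Entails [] D (exSeq ts Y) ∧ j ∉ (chainModel n).sem (exSeq ts Y) := by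
  induction D with
  | top => exact fun h => absurd trivial h
  | cn a => exact fun h => ⟨[], .cn a, by simp, .inr ⟨a, rfl⟩, Entails.refl _ _, h⟩
  | conj c d ihc ihd =>
    intro j h
    by_cases hc : j ∈ (chainModel n).sem c
    · obtain ⟨ts, Y, hlen, hY, hent, hj⟩ := ihd fun hd => h ⟨hc, hd⟩
      exact ⟨ts, Y, hlen, hY, hent.conj_right, hj⟩
    · obtain ⟨ts, Y, hlen, hY, hent, hj⟩ := ihc hc
      exact ⟨ts, Y, hlen, hY, hent.conj_left, hj⟩
  | ex t c ih =>
    intro j h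
    by_cases hjn : j < n
    · obtain ⟨ts, Y, hlen, hY, hent, hj⟩ := ih fun hc => h (chainModel_mem_ex.2 ⟨hjn, hc⟩)
      refine ⟨t :: ts, Y, by simp only [List.length_cons]; omega, hY, hent.ex t, ?_⟩
      exact fun hts => hj (chainModel_mem_ex.1 hts).2
    · exact ⟨[t], .top, by simp, .inl rfl, Entails.top.ex t,
        fun hts => hjn (chainModel_mem_ex.1 hts).1⟩

theorem T0_nonentailment_witness_general (n i : ℕ) (D : ELC CN RN)
    (h : ¬ Entails (T0 n) (.cn (.X i)) D) :
    ∃ (ts : List RN) (Y : ELC CN RN), ts.length ≤ n - i + 1 ∧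
      (Y = .top ∨ ∃ a : CN, Y = .cn a) ∧
      Entails [] D (exSeq ts Y) ∧
      ¬ Entails (T0 n) (.cn (.X i)) (exSeq ts Y) := by
  have hD : i ∉ (chainModel n).sem D := mt entails_T0_iff_mem_chainModel.2 h
  obtain ⟨ts, Y, hlen, hY, hent, hi⟩ := exists_exSeq_of_not_mem_chainModel D hD
  exact ⟨ts, Y, hlen, hY, hent, mt entails_T0_iff_mem_chainModel.1 hi⟩

/-- if `T_0 ⊭ X_i ⊑ D`, then there is a word `t_1…t_l` over
`{r,s}` with `l ≤ n − i + 1` and `Y` either `⊤` or a concept name such that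
`∅ ⊨ D ⊑ ∃t_1…∃t_l.Y` and `T_0 ⊭ X_i ⊑ ∃t_1…∃t_l.Y`. -/
theorem T0_nonentailment_witness (n i : ℕ) (hi : i ≤ n) (D : ELC CN RN)
    (h : ¬ Entails (T0 n) (.cn (.X i)) D) :
    ∃ (ts : List RN) (Y : ELC CN RN), ts.length ≤ n - i + 1 ∧
      (Y = .top ∨ ∃ a : CN, Y = .cn a) ∧
      Entails [] D (exSeq ts Y) ∧
      ¬ Entails (T0 n) (.cn (.X i)) (exSeq ts Y) :=
  T0_nonentailment_witness_general n i D h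
end
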